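/- For all integers n, k and ℓ with 2 ≤ k < ℓ ≤ ⌊n/2⌋, there exists a graph G of order n (namely G = K_{ℓ,n−ℓ}) such that γ_{×k,t}(G_I) = n(k+1) − 2ℓ. -/

import Mathlib

open SimpleGraph

/-- The inflated graph `G_I` of a graph `G`: its vertices are the darts (oriented edges) of
`G`; the darts with first coordinate `x` form the clique `X_x` (of size `deg x`), and each
edge `xy` of `G` gives the "blue" edge between the dart `(x,y)` and its reverse `(y,x)`;
these blue edges form a perfect matching.  Equivalently, `inflation G` is the line graph of
the subdivision of `G`. -/
def inflation {V : Type*} (G : SimpleGraph V) : SimpleGraph G.Dart :=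
  SimpleGraph.fromRel (fun d₁ d₂ => d₁.toProd.1 = d₂.toProd.1 ∨ d₁.toProd = d₂.toProd.swap)

/-- `S` is a `k`-tuple total dominating set of `H`: every vertex has at least `k`
neighbours in `S`. -/
def IsKTDS {W : Type*} (H : SimpleGraph W) (k : ℕ) (S : Set W) : Prop :=
  ∀ v : W, k ≤ (S ∩ H.neighborSet v).ncard

/-- The `k`-tuple total domination number of `H`: the minimum cardinality of a `k`-tuple
total dominating set. -/
noncomputable def ktdn {W : Type*} (H : SimpleGraph W) (k : ℕ) : ℕ :=
  sInf {n | ∃ S : Set W, IsKTDS H k S ∧ S.ncard = n}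

/-- `H` is a 2-factor of `G`: a spanning 2-regular subgraph of `G`, i.e. a vertex-disjoint
union of cycles covering all vertices. -/
def IsTwoFactor {V : Type*} (G H : SimpleGraph V) : Prop :=
  H ≤ G ∧ ∀ v : V, (H.neighborSet v).ncard = 2

/-- `G` is a `k`-Hamiltonian-like decomposable graph (kHLD-graph): `G` contains `k`
pairwise edge-disjoint 2-factors. -/
def IsKHLD {V : Type*} (G : SimpleGraph V) (k : ℕ) : Prop :=
  ∃ F : Fin k → SimpleGraph V, (∀ i, IsTwoFactor G (F i)) ∧
    ∀ i j, i ≠ j → Disjoint (F i) (F j)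

/-- `M` is a perfect matching of `G`, viewed as a 1-regular spanning subgraph. -/
def IsPerfectMatchingGraph {V : Type*} (G M : SimpleGraph V) : Prop :=
  M ≤ G ∧ ∀ v : V, (M.neighborSet v).ncard = 1

/-- `M` is a matching of `G`: a subgraph of maximum degree at most 1. -/
def IsMatchingGraph {V : Type*} (G M : SimpleGraph V) : Prop :=
  M ≤ G ∧ ∀ v : V, (M.neighborSet v).ncard ≤ 1

/-- `G` is a kHLPM-graph: `G` contains `k` pairwise edge-disjoint 2-factors together with
a perfect matching edge-disjoint from each of these 2-factors. -/
def IsKHLPM {V : Type*} (G : SimpleGraph V) (k : ℕ) : Prop :=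
  ∃ (F : Fin k → SimpleGraph V) (M : SimpleGraph V),
    (∀ i, IsTwoFactor G (F i)) ∧ (∀ i j, i ≠ j → Disjoint (F i) (F j)) ∧
    IsPerfectMatchingGraph G M ∧ ∀ i, Disjoint M (F i)

/-- `G` is a kHLMM-graph: `G` contains `k` pairwise edge-disjoint 2-factors together with
a matching of size `⌊n/2⌋` edge-disjoint from each of these 2-factors. -/
def IsKHLMM {V : Type*} [Fintype V] (G : SimpleGraph V) (k : ℕ) : Prop :=
  ∃ (F : Fin k → SimpleGraph V) (M : SimpleGraph V),
    (∀ i, IsTwoFactor G (F i)) ∧ (∀ i j, i ≠ j → Disjoint (F i) (F j)) ∧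
    IsMatchingGraph G M ∧ M.edgeSet.ncard = Fintype.card V / 2 ∧ ∀ i, Disjoint M (F i)

/-- The graph `F` on `V ⊕ W` obtained from the disjoint union of `G` (on `V`) and `H`
(on `W`) by adding the single edge between `x : V` and `y : W`.  When `G` and `H` are
connected, this added edge is a cut-edge of `F` whose removal leaves exactly the two
components `G` and `H`. -/
def joinByEdge {V W : Type*} (G : SimpleGraph V) (H : SimpleGraph W) (x : V) (y : W) :
    SimpleGraph (V ⊕ W) :=
  SimpleGraph.fromRel (fun a b =>
    match a, b with
    | Sum.inl u, Sum.inl v => G.Adj u v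
    | Sum.inr u, Sum.inr v => H.Adj u v
    | Sum.inl u, Sum.inr v => u = x ∧ v = y
    | Sum.inr _, Sum.inl _ => False)

/-- The generalized Petersen graph `P(n,m)`: vertices `a_i` (the left copies) and `b_i`
(the right copies) for `i ∈ ZMod n`, with edges `a_i a_{i+1}`, `a_i b_i`, `b_i b_{i+m}`. -/
def genPetersen (n m : ℕ) : SimpleGraph (ZMod n ⊕ ZMod n) :=
  SimpleGraph.fromRel (fun a b =>
    match a, b with
    | Sum.inl i, Sum.inl j => j = i + 1
    | Sum.inl i, Sum.inr j => j = i
    | Sum.inr i, Sum.inr j => j = i + (m : ZMod n)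
    | Sum.inr _, Sum.inl _ => False)

/-- Cyclic distance between `i` and `j` on the cycle `ZMod n`. -/
def cycDist (n : ℕ) (i j : ZMod n) : ℕ := min (i - j).val (j - i).val

/-- The Harary graph `H_{m,n}` on `ZMod n`: each vertex is adjacent to the nearest `m/2`
vertices in each direction around the circle; if `m` is odd and `n` is even, each vertex
is also adjacent to the diametrically opposite vertex; if `m` and `n` are both odd, the
edges `(i, i + (n-1)/2)` for `0 ≤ i ≤ (n-1)/2` are added instead. -/
def harary (m n : ℕ) : SimpleGraph (ZMod n) :=
  SimpleGraph.fromRel (fun i j =>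
    (1 ≤ cycDist n i j ∧ cycDist n i j ≤ m / 2) ∨
    (m % 2 = 1 ∧ n % 2 = 0 ∧ j = i + ((n / 2 : ℕ) : ZMod n)) ∨
    (m % 2 = 1 ∧ n % 2 = 1 ∧ (∃ t : ℕ, t ≤ (n - 1) / 2 ∧ i = (t : ZMod n)) ∧
      j = i + (((n - 1) / 2 : ℕ) : ZMod n)))

/-- The graph obtained by gluing the graphs `G i` (on vertex types `V i`) at the
distinguished vertices `x i`, which are all identified to the single vertex `none`.
The `v`-components of the resulting graph at the cut-vertex `v = none` are exactly
(canonical copies of) the graphs `G i`. -/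
def wedgeAt {m : ℕ} {V : Fin m → Type*} (G : ∀ i, SimpleGraph (V i)) (x : ∀ i, V i) :
    SimpleGraph (Option (Σ i : Fin m, {u : V i // u ≠ x i})) :=
  SimpleGraph.fromRel (fun a b =>
    match a, b with
    | none, some ⟨i, u⟩ => (G i).Adj (x i) u.val
    | some ⟨i, u⟩, some ⟨j, w⟩ => ∃ h : i = j, (G j).Adj (cast (congrArg V h) u.val) w.val
    | _, _ => False)

/-!
In `inflation G` a dart `d` is adjacent exactly to the other darts of its cell
`X_{d.fst}` and to its reverse `d.symm`. Hence `S` is a `k`-tuple total dominating set iff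
`k + [d ∈ S] ≤ |S ∩ X_{d.fst}| + [d.symm ∈ S]` for every dart `d`. For `k ≥ 2` this forces
`|S ∩ X_x| ≥ k` for every vertex `x`, with `S` closed under reversal on the cells where equality
holds. If `R` is an independent set and `B ⊆ R` is the set of such tight cells, the cells in `R`
carry at least `(k+1)|R| - |B|` darts of `S`, while those outside `R` carry at least `k|Rᶜ|`
and, through reversal, at least `k|B|`; so `|S| ≥ (k-1)|V| + 2|R|`. For `K_{ℓ,n-ℓ}` with `R` the
side of size `n - ℓ` this is `n(k+1) - 2ℓ`. It is attained by identifying `ℓ` vertices of that side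
with the other side `ℤ/ℓ`, taking the circulant darts `i → j`, `j → i` with `j - i ∈ A`,
`|A| = k`, and `k+1` darts out of each of the remaining `n - 2ℓ` vertices.
-/

open scoped Finset

theorem Set.ncard_inter_preimage_eq_sum {α β : Type*} [Finite α] [DecidableEq β] (f : α → β)
    (S : Set α) (A : Finset β) :
    (S ∩ f ⁻¹' A).ncard = ∑ b ∈ A, (S ∩ f ⁻¹' {b}).ncard := by
  have hunion : S ∩ f ⁻¹' A = ⋃ b ∈ (A : Set β), S ∩ f ⁻¹' {b} := by ext; simp
  rw [hunion, Set.Finite.ncard_biUnion A.finite_toSet (fun _ _ ↦ Set.toFinite _),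
    finsum_mem_coe_finset]
  intro b _ c _ hbc
  exact Set.disjoint_left.2 fun _ hb hc ↦ hbc (hb.2.symm.trans hc.2)

section Inflation

variable {V : Type*} {G : SimpleGraph V} {k : ℕ} {S : Set G.Dart}

instance SimpleGraph.Dart.finite [Finite V] : Finite G.Dart :=
  Finite.of_injective _ Dart.toProd_injective

/-- The clique `X_x` of `inflation G`. -/
def SimpleGraph.inflationCell (G : SimpleGraph V) (x : V) : Set G.Dart := {d | d.fst = x}

theorem inflation_adj_iff {d e : G.Dart} :
    (inflation G).Adj d e ↔ (e.fst = d.fst ∧ e ≠ d) ∨ e = d.symm := by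
  have hsymm : e = d.symm ↔ d.toProd = e.toProd.swap := by
    rw [Dart.ext_iff, Dart.symm_toProd, Prod.ext_iff, Prod.ext_iff]
    simp [eq_comm, and_comm]
  simp only [inflation, fromRel_adj, ← hsymm]
  have := d.symm_ne
  grind

theorem neighborSet_inflation (d : G.Dart) :
    (inflation G).neighborSet d = (G.inflationCell d.fst \ {d}) ∪ {d.symm} := by
  ext e
  simp [inflation_adj_iff, inflationCell, or_comm]

theorem ncard_inter_neighborSet_inflation_add [Finite V] (S : Set G.Dart)
    [DecidablePred (· ∈ S)] (d : G.Dart) :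
    (S ∩ (inflation G).neighborSet d).ncard + (if d ∈ S then 1 else 0) =
      (S ∩ G.inflationCell d.fst).ncard + (if d.symm ∈ S then 1 else 0) := by
  have hdisj : Disjoint ((S ∩ G.inflationCell d.fst) \ {d}) (S ∩ {d.symm}) :=
    Set.disjoint_left.2 fun e he he' ↦ by
      rw [he'.2] at he
      exact d.adj.ne he.1.2.symm
  rw [neighborSet_inflation, Set.inter_union_distrib_left, ← Set.inter_sdiff_assoc,
    Set.ncard_union_eq hdisj]
  have hsymm : (S ∩ {d.symm}).ncard = if d.symm ∈ S then 1 else 0 := by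
    split_ifs with h
    · rw [Set.inter_eq_right.2 (Set.singleton_subset_iff.2 h), Set.ncard_singleton]
    · rw [Set.inter_singleton_eq_empty.2 h, Set.ncard_empty]
  have hcell : ((S ∩ G.inflationCell d.fst) \ {d}).ncard + (if d ∈ S then 1 else 0) =
      (S ∩ G.inflationCell d.fst).ncard := by
    split_ifs with h
    · exact Set.ncard_sdiff_singleton_add_one ⟨h, rfl⟩
    · rw [Set.sdiff_singleton_eq_self fun h' ↦ h h'.1, add_zero]
  omega

theorem isKTDS_inflation_iff [Finite V] [DecidablePred (· ∈ S)] :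
    IsKTDS (inflation G) k S ↔ ∀ d : G.Dart, k + (if d ∈ S then 1 else 0) ≤
      (S ∩ G.inflationCell d.fst).ncard + (if d.symm ∈ S then 1 else 0) :=
  forall_congr' fun d ↦ by
    have := ncard_inter_neighborSet_inflation_add S d
    omega

theorem isKTDS_inflation_of [Finite V]
    (h : ∀ d : G.Dart, k + 1 ≤ (S ∩ G.inflationCell d.fst).ncard ∨
      (k ≤ (S ∩ G.inflationCell d.fst).ncard ∧ (d ∈ S → d.symm ∈ S))) :
    IsKTDS (inflation G) k S := by
  classical
  refine isKTDS_inflation_iff.2 fun d ↦ ?_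
  rcases h d with h | ⟨h, hsymm⟩ <;> split_ifs <;> grind

theorem IsKTDS.le_ncard_inter_inflationCell [Finite V] (hk : 2 ≤ k)
    (hS : IsKTDS (inflation G) k S) (d : G.Dart) : k ≤ (S ∩ G.inflationCell d.fst).ncard := by
  classical
  rw [isKTDS_inflation_iff] at hS
  obtain hempty | ⟨e, heS, hed⟩ := (S ∩ G.inflationCell d.fst).eq_empty_or_nonempty
  · have hd : d ∉ S := fun hd ↦ hempty.subset ⟨hd, rfl⟩
    have := hS d
    rw [hempty, Set.ncard_empty, if_neg hd] at this
    split_ifs at this <;> omega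
  · have := hS e
    rw [if_pos heS, show e.fst = d.fst from hed] at this
    split_ifs at this <;> omega

theorem IsKTDS.symm_mem_of_ncard_eq [Finite V] (hS : IsKTDS (inflation G) k S) {d : G.Dart}
    (hd : d ∈ S) (hcell : (S ∩ G.inflationCell d.fst).ncard = k) : d.symm ∈ S := by
  classical
  rw [isKTDS_inflation_iff] at hS
  have := hS d
  rw [if_pos hd, hcell] at this
  split_ifs at this with h
  · exact h
  · omega

open Finset in
theorem IsKTDS.add_ncard_le_of_isIndepSet [Fintype V] [DecidableEq V] (hk : 2 ≤ k)
    (hG : ∀ x, ∃ y, G.Adj x y) {R : Finset V} (hR : G.IsIndepSet R)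
    (hS : IsKTDS (inflation G) k S) : (k - 1) * Fintype.card V + 2 * #R ≤ S.ncard := by
  set s : V → ℕ := fun x ↦ (S ∩ G.inflationCell x).ncard
  have hcell (x : V) : k ≤ s x := by
    obtain ⟨y, hxy⟩ := hG x
    exact hS.le_ncard_inter_inflationCell hk ⟨(x, y), hxy⟩
  have hsum (A : Finset V) : (S ∩ (fun d : G.Dart ↦ d.fst) ⁻¹' A).ncard = ∑ x ∈ A, s x :=
    Set.ncard_inter_preimage_eq_sum _ S A
  have htotal : S.ncard = ∑ x ∈ R, s x + ∑ x ∈ Rᶜ, s x := by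
    rw [sum_add_sum_compl, ← hsum]
    simp
  set B := R.filter (fun x ↦ s x = k)
  have hright : (k + 1) * #R ≤ ∑ x ∈ R, s x + #B := by
    rw [card_filter, ← sum_add_distrib, mul_comm, ← smul_eq_mul, ← sum_const]
    exact sum_le_sum fun x _ ↦ by
      have := hcell x
      split_ifs <;> omega
  have hleft : k * #Rᶜ ≤ ∑ x ∈ Rᶜ, s x := by
    simpa [mul_comm] using card_nsmul_le_sum Rᶜ s k fun x _ ↦ hcell x
  have hreverse : k * #B ≤ ∑ x ∈ Rᶜ, s x := by
    have hsub : Dart.symm '' (S ∩ (fun d : G.Dart ↦ d.fst) ⁻¹' B) ⊆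
        S ∩ (fun d : G.Dart ↦ d.fst) ⁻¹' ↑Rᶜ := by
      rintro _ ⟨d, ⟨hdS, hdB⟩, rfl⟩
      obtain ⟨hdR, hdk⟩ := mem_filter.1 hdB
      refine ⟨hS.symm_mem_of_ncard_eq hdS hdk, ?_⟩
      simpa using fun hsR ↦ hR hdR hsR d.adj.ne d.adj
    calc k * #B = ∑ x ∈ B, s x := by
          rw [sum_congr rfl fun x hx ↦ (mem_filter.1 hx).2, sum_const, smul_eq_mul, mul_comm]
      _ = (Dart.symm '' (S ∩ (fun d : G.Dart ↦ d.fst) ⁻¹' B)).ncard := by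
          rw [Set.ncard_image_of_injective _ Dart.symm_involutive.injective, hsum]
      _ ≤ ∑ x ∈ Rᶜ, s x := hsum Rᶜ ▸ Set.ncard_le_ncard hsub
  have hcompl : (k - 1) * #Rᶜ + #B ≤ ∑ x ∈ Rᶜ, s x := by
    obtain ⟨k, rfl⟩ : ∃ k', k = k' + 1 := ⟨k - 1, by omega⟩
    rcases le_total #B #Rᶜ with h | h <;> simp only [add_tsub_cancel_right] <;> nlinarith
  have hcard : #R + #Rᶜ = Fintype.card V := card_add_card_compl R
  obtain ⟨k, rfl⟩ : ∃ k', k = k' + 1 := ⟨k - 1, by omega⟩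
  simp only [add_tsub_cancel_right] at hcompl ⊢
  rw [htotal, ← hcard]
  nlinarith

theorem ncard_setOf_inter_inflationCell (x : V) (P : V → V → Prop) :
    ({d : G.Dart | P d.fst d.snd} ∩ G.inflationCell x).ncard = {y | G.Adj x y ∧ P x y}.ncard := by
  refine Set.ncard_congr (fun d _ ↦ d.snd) ?_ ?_ ?_
  · rintro d ⟨hP, rfl⟩
    exact ⟨d.adj, hP⟩
  · rintro d e ⟨-, hd⟩ ⟨-, he⟩ hde
    exact Dart.ext _ _ (Prod.ext (hd.trans he.symm) hde)
  · rintro y ⟨hxy, hP⟩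
    exact ⟨⟨(x, y), hxy⟩, ⟨hP, rfl⟩, rfl⟩

end Inflation

theorem IsKTDS.le_ncard_inflation_completeBipartiteGraph {α β : Type*} [Fintype α] [Fintype β]
    [Nonempty α] [Nonempty β] {k : ℕ} (hk : 2 ≤ k)
    {S : Set (completeBipartiteGraph α β).Dart}
    (hS : IsKTDS (inflation (completeBipartiteGraph α β)) k S) :
    (k - 1) * (Fintype.card α + Fintype.card β) + 2 * Fintype.card β ≤ S.ncard := by
  classical
  have hG (x : α ⊕ β) : ∃ y, (completeBipartiteGraph α β).Adj x y := by
    rcases x with a | b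
    · exact ⟨.inr (Classical.arbitrary β), by simp⟩
    · exact ⟨.inl (Classical.arbitrary α), by simp⟩
  have hR : (completeBipartiteGraph α β).IsIndepSet
      ((Finset.univ.map .inr : Finset (α ⊕ β)) : Set (α ⊕ β)) := by
    rintro _ hx _ hy -
    simp only [Finset.coe_map, Set.mem_image] at hx hy
    obtain ⟨b, -, rfl⟩ := hx
    obtain ⟨b', -, rfl⟩ := hy
    simp
  simpa [Fintype.card_sum] using hS.add_ncard_le_of_isIndepSet hk hG hR

section Circulant

variable {α γ : Type*} [AddGroup α] (A B : Finset α)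

def circulantRel : α ⊕ (α ⊕ γ) → α ⊕ (α ⊕ γ) → Prop
  | .inl i, .inr (.inl j) => j - i ∈ A
  | .inr (.inl j), .inl i => j - i ∈ A
  | .inr (.inr _), .inl i => i ∈ B
  | _, _ => False

def circulantDarts : Set (completeBipartiteGraph α (α ⊕ γ)).Dart :=
  {d | circulantRel A B d.fst d.snd}

theorem ncard_circulantDarts_inter_inflationCell (x : α ⊕ (α ⊕ γ)) :
    (circulantDarts A B ∩ (completeBipartiteGraph α (α ⊕ γ)).inflationCell x).ncard =
      Sum.elim (fun _ ↦ #A) (Sum.elim (fun _ ↦ #A) (fun _ ↦ #B)) x := by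
  rw [circulantDarts, ncard_setOf_inter_inflationCell]
  rcases x with i | j | c
  · have : {y | (completeBipartiteGraph α (α ⊕ γ)).Adj (.inl i) y ∧ circulantRel A B (.inl i) y}
        = (Sum.inr ∘ Sum.inl) '' (Equiv.subRight i ⁻¹' A) := by
      ext (_ | _ | _) <;> simp [circulantRel]
    rw [this, Set.ncard_image_of_injective _ (Sum.inr_injective.comp Sum.inl_injective),
      Set.ncard_preimage_of_injective_subset_range (Equiv.injective _) (by simp),
      Set.ncard_coe_finset]
    rfl
  · have : {y | (completeBipartiteGraph α (α ⊕ γ)).Adj (.inr (.inl j)) y ∧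
        circulantRel A B (.inr (.inl j)) y} = Sum.inl '' (Equiv.subLeft j ⁻¹' A) := by
      ext (_ | _ | _) <;> simp [circulantRel]
    rw [this, Set.ncard_image_of_injective _ Sum.inl_injective,
      Set.ncard_preimage_of_injective_subset_range (Equiv.injective _) (by simp),
      Set.ncard_coe_finset]
    rfl
  · have : {y | (completeBipartiteGraph α (α ⊕ γ)).Adj (.inr (.inr c)) y ∧
        circulantRel A B (.inr (.inr c)) y} = Sum.inl '' B := by
      ext (_ | _ | _) <;> simp [circulantRel]
    rw [this, Set.ncard_image_of_injective _ Sum.inl_injective, Set.ncard_coe_finset]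
    rfl

theorem ncard_circulantDarts [Fintype α] [Fintype γ] :
    (circulantDarts (γ := γ) A B).ncard = 2 * Fintype.card α * #A + Fintype.card γ * #B := by
  classical
  have hsum := Set.ncard_inter_preimage_eq_sum
    (fun d : (completeBipartiteGraph α (α ⊕ γ)).Dart ↦ d.fst) (circulantDarts A B) Finset.univ
  rw [Finset.coe_univ, Set.preimage_univ, Set.inter_univ] at hsum
  have hcell (x : α ⊕ (α ⊕ γ)) :
      (circulantDarts A B ∩
          (fun d : (completeBipartiteGraph α (α ⊕ γ)).Dart ↦ d.fst) ⁻¹' {x}).ncard =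
        Sum.elim (fun _ ↦ #A) (Sum.elim (fun _ ↦ #A) (fun _ ↦ #B)) x :=
    ncard_circulantDarts_inter_inflationCell A B x
  rw [hsum, Fintype.sum_sum_type, Fintype.sum_sum_type]
  simp only [hcell, Sum.elim_inl, Sum.elim_inr, Finset.sum_const, Finset.card_univ, smul_eq_mul]
  ring

theorem isKTDS_circulantDarts [Finite α] [Finite γ] {k : ℕ} (hA : #A = k) (hB : #B = k + 1) :
    IsKTDS (inflation (completeBipartiteGraph α (α ⊕ γ))) k (circulantDarts A B) := by
  refine isKTDS_inflation_of fun ⟨⟨x, y⟩, hxy⟩ ↦ ?_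
  rw [ncard_circulantDarts_inter_inflationCell]
  change _ ∨ _ ∧ (circulantRel A B x y → circulantRel A B y x)
  rcases x with i | j | c <;> rcases y with i' | j' | c' <;>
    simp [completeBipartiteGraph, circulantRel, hA, hB] at hxy ⊢

end Circulant

/-- **Theorem (existence of graphs attaining `n(k+1) - 2ℓ`).** For all integers `n`, `k`,
`ℓ` with `2 ≤ k < ℓ ≤ ⌊n/2⌋`, there is a graph `G` of order `n` (namely `K_{ℓ,n-ℓ}`) with
`γ_{×k,t}(G_I) = n(k+1) - 2ℓ`. -/
theorem stmt18 (n k ℓ : ℕ) (hk : 2 ≤ k) (hkl : k < ℓ) (hl : ℓ ≤ n / 2) :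
    ∃ (Vt : Type) (_ : Fintype Vt) (G : SimpleGraph Vt),
      Fintype.card Vt = n ∧ ktdn (inflation G) k = n * (k + 1) - 2 * ℓ := by
  have : NeZero ℓ := ⟨by omega⟩
  obtain ⟨r, rfl⟩ : ∃ r, n = 2 * ℓ + r := ⟨n - 2 * ℓ, by omega⟩
  obtain ⟨A, -, hA⟩ := (Finset.univ : Finset (ZMod ℓ)).exists_subset_card_eq (n := k)
    (by simp; omega)
  obtain ⟨B, -, hB⟩ := (Finset.univ : Finset (ZMod ℓ)).exists_subset_card_eq (n := k + 1)
    (by simp; omega)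
  have hvalue : (2 * ℓ + r) * (k + 1) - 2 * ℓ = 2 * ℓ * k + r * (k + 1) := by
    rw [show (2 * ℓ + r) * (k + 1) = 2 * ℓ * k + r * (k + 1) + 2 * ℓ by ring]
    omega
  refine ⟨ZMod ℓ ⊕ (ZMod ℓ ⊕ Fin r), inferInstance, completeBipartiteGraph _ _, by simp; omega,
    IsLeast.csInf_eq ⟨⟨circulantDarts A B, isKTDS_circulantDarts A B hA hB, ?_⟩, ?_⟩⟩
  · rw [ncard_circulantDarts, ZMod.card, Fintype.card_fin, hA, hB, hvalue]
  · rintro _ ⟨S, hS, rfl⟩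
    have hlower := IsKTDS.le_ncard_inflation_completeBipartiteGraph hk hS
    simp only [Fintype.card_sum, ZMod.card, Fintype.card_fin] at hlower
    obtain ⟨k, rfl⟩ : ∃ k', k = k' + 1 := ⟨k - 1, by omega⟩
    simp only [add_tsub_cancel_right] at hlower
    rw [hvalue]
    nlinarith
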